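/- arXiv:math/0501391 — 4 statements merged into one kernel-verified Lean document; each statement's English description precedes it below -/
import Mathlib

section
/- For every τ ∈ ℂ with Im τ > 0 and every z ∈ ℂ, Φ(z,τ) = 0 if and only if z ∈ ℤ + ℤτ, i.e. z = mτ + n for some integers m, n. -/
open Complex Filter

/-- `Φ(z,τ) = (exp(πiz) − exp(−πiz)) · ∏_{k=1}^∞ (1 − t q^k)(1 − t⁻¹ q^k)/(1 − q^k)²`,
with `q = exp(2πiτ)`, `t = exp(2πiz)`; for `Im τ > 0` (so `|q| < 1`) the product converges
absolutely. -/
noncomputable def Phi (z τ : ℂ) : ℂ :=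
  (Complex.exp (Real.pi * Complex.I * z) - Complex.exp (-(Real.pi * Complex.I * z))) *
    ∏' k : ℕ,
      (1 - Complex.exp (2 * Real.pi * Complex.I * z) *
            Complex.exp (2 * Real.pi * Complex.I * τ) ^ (k + 1)) *
        (1 - (Complex.exp (2 * Real.pi * Complex.I * z))⁻¹ *
            Complex.exp (2 * Real.pi * Complex.I * τ) ^ (k + 1)) /
        (1 - Complex.exp (2 * Real.pi * Complex.I * τ) ^ (k + 1)) ^ 2

private lemma tprod_eq_zero_aux {f : ℕ → ℂ} (i : ℕ) (h : f i = 0) : ∏' k, f k = 0 := by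
  have hp : HasProd f 0 := by
    rw [HasProd]
    apply Tendsto.congr' _ (tendsto_const_nhds : Filter.Tendsto (fun _ : Finset ℕ => (0 : ℂ)) atTop (nhds 0))
    filter_upwards [Filter.eventually_ge_atTop ({i} : Finset ℕ)] with s hs
    exact (Finset.prod_eq_zero (hs (Finset.mem_singleton_self i)) h).symm
  exact hp.tprod_eq

private lemma exp_two_pi_mul_eq_one_iff (w : ℂ) :
    Complex.exp (2 * Real.pi * Complex.I * w) = 1 ↔ ∃ n : ℤ, w = (n : ℂ) := by
  rw [Complex.exp_eq_one_iff]
  constructor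
  · rintro ⟨n, hn⟩
    refine ⟨n, mul_left_cancel₀ Complex.two_pi_I_ne_zero ?_⟩
    rw [show (2 * (Real.pi : ℂ) * Complex.I) * w = 2 * Real.pi * Complex.I * w by ring, hn]
    ring
  · rintro ⟨n, hn⟩
    exact ⟨n, by rw [hn]; ring⟩

/-- For `Im τ > 0`, `Φ(z,τ) = 0` iff `z = mτ + n` for some integers `m, n`. -/
theorem Phi_eq_zero_iff (τ : ℂ) (hτ : 0 < τ.im) (z : ℂ) :
    Phi z τ = 0 ↔ ∃ m n : ℤ, z = (m : ℂ) * τ + (n : ℂ) := by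
  rw [Phi]
  set q : ℂ := Complex.exp (2 * Real.pi * Complex.I * τ) with hq
  set t : ℂ := Complex.exp (2 * Real.pi * Complex.I * z) with ht
  set f : ℕ → ℂ :=
    fun k => (1 - t * q ^ (k + 1)) * (1 - t⁻¹ * q ^ (k + 1)) / (1 - q ^ (k + 1)) ^ 2 with hf
  have ht0 : t ≠ 0 := Complex.exp_ne_zero _
  -- |q| < 1
  have hqlt : ‖q‖ < 1 := by
    rw [hq, Complex.norm_exp, Real.exp_lt_one_iff]
    have hre : (2 * (Real.pi : ℂ) * Complex.I * τ).re = -(2 * Real.pi * τ.im) := by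
      simp [Complex.mul_re, Complex.mul_im]
    rw [hre]
    have := Real.pi_pos
    nlinarith
  have hq0 : (0 : ℝ) ≤ ‖q‖ := norm_nonneg _
  -- identification of factors with exponentials
  have hta : ∀ k : ℕ, t * q ^ (k + 1) =
      Complex.exp (2 * Real.pi * Complex.I * (z + ((k : ℂ) + 1) * τ)) := by
    intro k
    rw [ht, hq, ← Complex.exp_nat_mul, ← Complex.exp_add]
    push_cast
    ring_nf
  have htb : ∀ k : ℕ, t⁻¹ * q ^ (k + 1) =
      Complex.exp (2 * Real.pi * Complex.I * (((k : ℂ) + 1) * τ - z)) := by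
    intro k
    rw [ht, hq, ← Complex.exp_neg, ← Complex.exp_nat_mul, ← Complex.exp_add]
    push_cast
    ring_nf
  -- the sine factor vanishes iff t = 1
  have hsine : Complex.exp (Real.pi * Complex.I * z) -
      Complex.exp (-(Real.pi * Complex.I * z)) = 0 ↔ t = 1 := by
    rw [sub_eq_zero, ht]
    constructor
    · intro h
      have h1 : Complex.exp (2 * Real.pi * Complex.I * z) =
          Complex.exp (Real.pi * Complex.I * z) * Complex.exp (Real.pi * Complex.I * z) := by
        rw [← Complex.exp_add]; ring_nf
      rw [h1]
      nth_rewrite 2 [h]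
      rw [← Complex.exp_add]
      simp
    · intro h
      have h2 : Complex.exp (Real.pi * Complex.I * z) * Complex.exp (Real.pi * Complex.I * z)
          = 1 := by
        rw [← Complex.exp_add, show (Real.pi : ℂ) * Complex.I * z + Real.pi * Complex.I * z
            = 2 * Real.pi * Complex.I * z by ring, h]
      have h3 : Complex.exp (Real.pi * Complex.I * z) *
          Complex.exp (-(Real.pi * Complex.I * z)) = 1 := by
        rw [← Complex.exp_add]; simp
      exact mul_left_cancel₀ (Complex.exp_ne_zero _) (h2.trans h3.symm)
  have hqpow : ∀ k : ℕ, q ^ (k + 1) ≠ 1 := by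
    intro k h
    have hlt : ‖q ^ (k + 1)‖ < 1 := by
      rw [norm_pow]
      exact pow_lt_one₀ hq0 hqlt (Nat.succ_ne_zero k)
    rw [h, norm_one] at hlt
    exact lt_irrefl _ hlt
  constructor
  · -- Phi = 0 → z is a lattice point
    intro h0
    by_contra hcon
    push_neg at hcon
    -- sine factor nonzero
    have hsne : Complex.exp (Real.pi * Complex.I * z) -
        Complex.exp (-(Real.pi * Complex.I * z)) ≠ 0 := by
      intro h
      obtain ⟨n, hn⟩ := (exp_two_pi_mul_eq_one_iff z).mp (ht ▸ hsine.mp h)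
      exact hcon 0 n (by rw [hn]; push_cast; ring)
    -- each factor nonzero
    have hne : ∀ k : ℕ, f k ≠ 0 := by
      intro k
      have ha : 1 - t * q ^ (k + 1) ≠ 0 := by
        intro h
        rw [sub_eq_zero, eq_comm, hta k, exp_two_pi_mul_eq_one_iff] at h
        obtain ⟨n, hn⟩ := h
        refine hcon (-(k + 1)) n ?_
        push_cast
        linear_combination hn
      have hb : 1 - t⁻¹ * q ^ (k + 1) ≠ 0 := by
        intro h
        rw [sub_eq_zero, eq_comm, htb k, exp_two_pi_mul_eq_one_iff] at h
        obtain ⟨n, hn⟩ := h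
        refine hcon (k + 1) (-n) ?_
        push_cast
        linear_combination -hn
      exact div_ne_zero (mul_ne_zero ha hb)
        (pow_ne_zero _ (sub_ne_zero.mpr (Ne.symm (hqpow k))))
    -- the key estimate : ‖f k - 1‖ ≤ C * ‖q‖^(k+1)
    set C : ℝ := ‖2 - t - t⁻¹‖ / (1 - ‖q‖) ^ 2 with hC
    have hCnn : 0 ≤ C := div_nonneg (norm_nonneg _) (by positivity)
    have hbound : ∀ k : ℕ, ‖f k - 1‖ ≤ C * ‖q‖ ^ (k + 1) := by
      intro k
      have hden : (1 : ℂ) - q ^ (k + 1) ≠ 0 := sub_ne_zero.mpr (Ne.symm (hqpow k))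
      have e1 : f k - 1 = q ^ (k + 1) * (2 - t - t⁻¹) / (1 - q ^ (k + 1)) ^ 2 := by
        rw [hf]
        field_simp
        ring
      have hdlow : 1 - ‖q‖ ≤ ‖1 - q ^ (k + 1)‖ := by
        have h2 : ‖q ^ (k + 1)‖ ≤ ‖q‖ := by
          rw [norm_pow]
          calc ‖q‖ ^ (k + 1) ≤ ‖q‖ ^ 1 := pow_le_pow_of_le_one hq0 hqlt.le (by omega)
            _ = ‖q‖ := pow_one _
        have h3 : ‖(1 : ℂ)‖ - ‖q ^ (k + 1)‖ ≤ ‖1 - q ^ (k + 1)‖ := norm_sub_norm_le _ _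
        rw [norm_one] at h3
        linarith
      have h1r : (0 : ℝ) < 1 - ‖q‖ := by linarith
      rw [e1, norm_div, norm_mul, norm_pow, norm_pow]
      rw [hC, show ‖2 - t - t⁻¹‖ / (1 - ‖q‖) ^ 2 * ‖q‖ ^ (k + 1)
          = ‖q‖ ^ (k + 1) * ‖2 - t - t⁻¹‖ / (1 - ‖q‖) ^ 2 by ring]
      gcongr
    -- summability of the logs
    have htend : Tendsto (fun k : ℕ => C * ‖q‖ ^ (k + 1)) atTop (nhds 0) := by
      have h := (tendsto_pow_atTop_nhds_zero_of_lt_one hq0 hqlt).const_mul (C * ‖q‖)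
      rw [mul_zero] at h
      refine h.congr fun k => ?_
      rw [pow_succ]
      ring
    have hsum : Summable fun k => Complex.log (f k) := by
      have hgs : Summable (fun k : ℕ => (3 / 2) * (C * ‖q‖ ^ (k + 1))) := by
        have h := (summable_geometric_of_lt_one hq0 hqlt).mul_left (3 / 2 * (C * ‖q‖))
        refine h.congr fun k => ?_
        rw [pow_succ]
        ring
      refine Summable.of_norm_bounded_eventually_nat hgs ?_
      have hev : ∀ᶠ k : ℕ in atTop, C * ‖q‖ ^ (k + 1) < 1 / 2 :=
        htend.eventually_lt_const (by norm_num)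
      filter_upwards [hev] with k hk
      have hk2 : ‖f k - 1‖ ≤ 1 / 2 := le_trans (hbound k) hk.le
      have hlog := Complex.norm_log_one_add_half_le_self (z := f k - 1) hk2
      rw [show (1 : ℂ) + (f k - 1) = f k by ring] at hlog
      refine hlog.trans ?_
      have := hbound k
      nlinarith
    -- the infinite product is nonzero
    have hprod : (∏' k, f k) ≠ 0 := by
      have hmul := Complex.cexp_tsum_eq_tprod (f := f) hne hsum
      have h := hmul
      rw [← h]
      exact Complex.exp_ne_zero _
    exact absurd h0 (mul_ne_zero hsne hprod)
  · -- lattice point → Phi = 0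
    rintro ⟨m, n, hz⟩
    rcases lt_trichotomy m 0 with hm | hm | hm
    · -- m < 0 : first numerator factor vanishes at k = (-m-1).toNat
      set k : ℕ := (-m - 1).toNat with hk
      have hkz : ((k : ℕ) : ℤ) = -m - 1 := Int.toNat_of_nonneg (by omega)
      have hkC : ((k : ℕ) : ℂ) + 1 = -(m : ℂ) := by
        have h := congrArg (fun x : ℤ => (x : ℂ)) hkz
        push_cast at h
        linear_combination h
      have hfk : f k = 0 := by
        have ha : 1 - t * q ^ (k + 1) = 0 := by
          rw [hta k, sub_eq_zero, eq_comm, exp_two_pi_mul_eq_one_iff]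
          exact ⟨n, by rw [hz, hkC]; ring⟩
        simp only [hf]
        rw [ha, zero_mul, zero_div]
      rw [tprod_eq_zero_aux k hfk, mul_zero]
    · -- m = 0 : the sine factor vanishes
      have htone : t = 1 := by
        rw [ht, exp_two_pi_mul_eq_one_iff]
        exact ⟨n, by rw [hz, hm]; push_cast; ring⟩
      rw [hsine.mpr htone, zero_mul]
    · -- m > 0 : second numerator factor vanishes at k = (m-1).toNat
      set k : ℕ := (m - 1).toNat with hk
      have hkz : ((k : ℕ) : ℤ) = m - 1 := Int.toNat_of_nonneg (by omega)
      have hkC : ((k : ℕ) : ℂ) + 1 = (m : ℂ) := by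
        have h := congrArg (fun x : ℤ => (x : ℂ)) hkz
        push_cast at h
        linear_combination h
      have hfk : f k = 0 := by
        have hb : 1 - t⁻¹ * q ^ (k + 1) = 0 := by
          rw [htb k, sub_eq_zero, eq_comm, exp_two_pi_mul_eq_one_iff]
          exact ⟨-n, by rw [hz, hkC]; push_cast; ring⟩
        simp only [hf]
        rw [hb, mul_zero, zero_div]
      rw [tprod_eq_zero_aux k hfk, mul_zero]
end

section
/- For every τ ∈ ℂ with Im τ > 0 and every z ∈ ℂ, one has Φ(z, τ+1) = Φ(z,τ), and Φ(z/τ, −1/τ) = τ^{-1} · exp(πiz²/τ) · Φ(z,τ). -/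
set_option maxHeartbeats 1000000


open Complex Filter

lemma hasProd_zero_of_eq_zero {f : ℕ → ℂ} {j : ℕ} (h : f j = 0) : HasProd f 0 := by
  have hev : ∀ᶠ s : Finset ℕ in atTop, (∏ i ∈ s, f i) = 0 := by
    filter_upwards [Filter.eventually_ge_atTop ({j} : Finset ℕ)] with s hs
    exact Finset.prod_eq_zero (hs (Finset.mem_singleton_self j)) h
  exact Tendsto.congr' (by filter_upwards [hev] with s hs using hs.symm) tendsto_const_nhds

lemma multipliable_one_add {v : ℕ → ℂ} (hv : Summable v) :
    Multipliable (fun k => 1 + v k) := by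
  by_cases h0 : ∀ k, 1 + v k ≠ 0
  · have hsmall : ∀ᶠ k in cofinite, ‖v k‖ ≤ 1/2 := by
      rw [Nat.cofinite_eq_atTop]
      have := (Metric.tendsto_nhds.mp hv.tendsto_atTop_zero) (1/2) one_half_pos
      filter_upwards [this] with k hk
      simpa [dist_zero_right] using hk.le
    have hlog : Summable (fun k => Complex.log (1 + v k)) := by
      apply Summable.of_norm_bounded_eventually (g := fun k => 3/2 * ‖v k‖)
        (hv.norm.mul_left _)
      filter_upwards [hsmall] with k hk
      exact Complex.norm_log_one_add_half_le_self hk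
    exact Complex.multipliable_of_summable_log hlog
  · push_neg at h0
    obtain ⟨j, hj⟩ := h0
    exact ⟨0, hasProd_zero_of_eq_zero hj⟩

lemma differentiable_finprod {s : Finset ℕ} {f : ℕ → ℂ → ℂ}
    (hf : ∀ k, Differentiable ℂ (f k)) :
    Differentiable ℂ (fun z => ∏ k ∈ s, f k z) := by
  classical
  induction s using Finset.induction with
  | empty => simpa using differentiable_const (1 : ℂ)
  | insert a s h ih =>
      simp only [Finset.prod_insert h]
      exact (hf _).mul ih

lemma master_rep {v : ℕ → ℂ → ℂ}
    (hd : ∀ k, Differentiable ℂ (v k))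
    (hb : ∀ R : ℝ, 0 < R → ∃ u : ℕ → ℝ, Summable u ∧ ∀ (k : ℕ), ∀ z : ℂ, ‖z‖ ≤ R → ‖v k z‖ ≤ u k)
    (z₀ : ℂ) :
    ∃ (K : ℕ) (s : Set ℂ) (T : ℂ → ℂ), IsOpen s ∧ z₀ ∈ s ∧ DifferentiableOn ℂ T s ∧
      (∀ z ∈ s, ∀ k, 1 + v (k + K) z ≠ 0) ∧
      (∀ z ∈ s, Multipliable (fun k => 1 + v k z)) ∧
      (∀ z ∈ s, (∏' k, (1 + v k z)) =
        (∏ k ∈ Finset.range K, (1 + v k z)) * Complex.exp (T z)) := by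
  classical
  set R : ℝ := ‖z₀‖ + 1 with hR
  obtain ⟨u, hu, hub⟩ := hb R (by positivity)
  obtain ⟨K, hK⟩ : ∃ K : ℕ, ∀ k, u (k + K) ≤ 1/2 := by
    have := (Metric.tendsto_nhds.mp hu.tendsto_atTop_zero) (1/2) one_half_pos
    rw [eventually_atTop] at this
    obtain ⟨K, hK⟩ := this
    exact ⟨K, fun k => by simpa [Real.dist_eq] using (le_of_lt
      (lt_of_abs_lt (by simpa [dist_zero_right] using hK (k + K) (Nat.le_add_left _ _)))).trans le_rfl⟩
  set s : Set ℂ := Metric.ball 0 R with hs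
  have hmem : ∀ z ∈ s, ‖z‖ ≤ R := fun z hz => (mem_ball_zero_iff.mp hz).le
  have hz₀s : z₀ ∈ s := by simp [hs, hR, mem_ball_zero_iff, lt_add_one]
  have hsmall : ∀ z ∈ s, ∀ k : ℕ, ‖v (k + K) z‖ ≤ 1/2 :=
    fun z hz k => (hub (k + K) z (hmem z hz)).trans (hK k)
  have hne : ∀ z ∈ s, ∀ k : ℕ, 1 + v (k + K) z ≠ 0 := by
    intro z hz k h
    have hv1 : v (k + K) z = -1 := by linear_combination h
    have h2 := hsmall z hz k
    rw [hv1] at h2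
    norm_num at h2
  have hslit : ∀ z ∈ s, ∀ k : ℕ, 1 + v (k + K) z ∈ Complex.slitPlane := by
    intro z hz k
    rw [Complex.mem_slitPlane_iff]
    left
    have h1 : |(v (k + K) z).re| ≤ ‖v (k + K) z‖ := Complex.abs_re_le_norm _
    have := hsmall z hz k
    simp only [Complex.add_re, Complex.one_re]
    nlinarith [abs_le.mp h1]
  have husum : Summable (fun k => u (k + K)) := (summable_nat_add_iff K).mpr hu
  have hlogsum : ∀ z ∈ s, Summable (fun k => Complex.log (1 + v (k + K) z)) := by
    intro z hz
    apply Summable.of_norm_bounded (g := fun k => 3/2 * u (k + K)) (husum.mul_left _)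
    intro k
    calc ‖Complex.log (1 + v (k + K) z)‖ ≤ 3/2 * ‖v (k + K) z‖ :=
            Complex.norm_log_one_add_half_le_self (hsmall z hz k)
      _ ≤ 3/2 * u (k + K) := by
            have := hub (k + K) z (hmem z hz); nlinarith
  refine ⟨K, s, fun z => ∑' k, Complex.log (1 + v (k + K) z), Metric.isOpen_ball, hz₀s, ?_,
    hne, ?_, ?_⟩
  · -- differentiability of the log-tail sum
    apply TendstoLocallyUniformlyOn.differentiableOn
      (TendstoUniformlyOn.tendstoLocallyUniformlyOn
        (tendstoUniformlyOn_tsum (husum.mul_left (3/2 : ℝ)) ?_))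
      ?_ Metric.isOpen_ball
    · intro k z hz
      calc ‖Complex.log (1 + v (k + K) z)‖ ≤ 3/2 * ‖v (k + K) z‖ :=
              Complex.norm_log_one_add_half_le_self (hsmall z hz k)
        _ ≤ 3/2 * u (k + K) := by
              have := hub (k + K) z (hmem z hz); nlinarith
    · filter_upwards with t
      apply DifferentiableOn.fun_sum
      intro k _
      intro z hz
      exact (((hd (k + K)).const_add 1).differentiableAt.clog
        (hslit z hz k)).differentiableWithinAt
  · -- multipliability
    intro z hz
    have htail : Multipliable (fun k => 1 + v (k + K) z) := by
      apply multipliable_one_add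
      exact Summable.of_norm_bounded (g := fun k => u (k + K)) husum
        (fun k => hub (k + K) z (hmem z hz))
    exact htail.comp_nat_add
  · -- the representation
    intro z hz
    have htail : Multipliable (fun k => 1 + v (k + K) z) := by
      apply multipliable_one_add
      exact Summable.of_norm_bounded (g := fun k => u (k + K)) husum
        (fun k => hub (k + K) z (hmem z hz))
    have hsplit := Multipliable.prod_mul_tprod_nat_mul' (f := fun k => 1 + v k z) (k := K) htail
    rw [← hsplit]
    congr 1
    exact (Complex.cexp_tsum_eq_tprod (fun k => hne z hz k) (hlogsum z hz)).symm
lemma master_diff {v : ℕ → ℂ → ℂ}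
    (hd : ∀ k, Differentiable ℂ (v k))
    (hb : ∀ R : ℝ, 0 < R → ∃ u : ℕ → ℝ, Summable u ∧ ∀ (k : ℕ), ∀ z : ℂ, ‖z‖ ≤ R → ‖v k z‖ ≤ u k) :
    Differentiable ℂ (fun z => ∏' k, (1 + v k z)) := by
  intro z₀
  obtain ⟨K, s, T, hso, hz₀, hT, -, -, hrep⟩ := master_rep hd hb z₀
  have hdiff : DifferentiableAt ℂ
      (fun z => (∏ k ∈ Finset.range K, (1 + v k z)) * Complex.exp (T z)) z₀ := by
    apply DifferentiableAt.mul
    · exact (differentiable_finprod (f := fun k z => 1 + v k z)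
        (fun k => (hd k).const_add 1)) z₀
    · exact (hT.differentiableAt (hso.mem_nhds hz₀)).cexp
  apply hdiff.congr_of_eventuallyEq
  filter_upwards [hso.mem_nhds hz₀] with z hz using hrep z hz

lemma master_ne_zero {v : ℕ → ℂ → ℂ}
    (hd : ∀ k, Differentiable ℂ (v k))
    (hb : ∀ R : ℝ, 0 < R → ∃ u : ℕ → ℝ, Summable u ∧ ∀ (k : ℕ), ∀ z : ℂ, ‖z‖ ≤ R → ‖v k z‖ ≤ u k)
    (z : ℂ) (hz : ∀ k, 1 + v k z ≠ 0) :
    (∏' k, (1 + v k z)) ≠ 0 := by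
  obtain ⟨K, s, T, hso, hzs, hT, -, -, hrep⟩ := master_rep hd hb z
  rw [hrep z hzs]
  exact mul_ne_zero (Finset.prod_ne_zero_iff.mpr (fun k _ => hz k)) (Complex.exp_ne_zero _)

/-! ### The exponential `e w = exp(2πiw)` -/

noncomputable def ee (w : ℂ) : ℂ := Complex.exp (2 * Real.pi * Complex.I * w)

lemma ee_add (w w' : ℂ) : ee (w + w') = ee w * ee w' := by
  rw [ee, ee, ee, ← Complex.exp_add]
  ring_nf

lemma ee_ne_zero (w : ℂ) : ee w ≠ 0 := Complex.exp_ne_zero _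

lemma ee_inv (w : ℂ) : (ee w)⁻¹ = ee (-w) := by
  rw [ee, ee, ← Complex.exp_neg]
  ring_nf

lemma ee_zero : ee 0 = 1 := by simp [ee]

lemma ee_int (n : ℤ) : ee n = 1 := by
  rw [ee, Complex.exp_eq_one_iff]
  exact ⟨n, by ring⟩

lemma ee_one : ee 1 = 1 := by simpa using ee_int 1

lemma norm_ee (w : ℂ) : ‖ee w‖ = Real.exp (-(2 * Real.pi * w.im)) := by
  rw [ee, Complex.norm_exp]
  congr 1
  simp [Complex.mul_re, Complex.mul_im]

lemma ee_eq_one_iff {w : ℂ} : ee w = 1 ↔ ∃ n : ℤ, w = n := by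
  rw [ee, Complex.exp_eq_one_iff]
  constructor
  · rintro ⟨n, hn⟩
    have h2 : (2 * (Real.pi : ℂ) * Complex.I) ≠ 0 := by
      simp [Complex.I_ne_zero, Real.pi_ne_zero]
    exact ⟨n, mul_left_cancel₀ h2 (by linear_combination hn)⟩
  · rintro ⟨n, rfl⟩
    exact ⟨n, by ring⟩

lemma norm_ee_lt_one {σ : ℂ} (hσ : 0 < σ.im) : ‖ee σ‖ < 1 := by
  rw [norm_ee, Real.exp_lt_one_iff]
  have := Real.pi_pos
  nlinarith

lemma ee_diff : Differentiable ℂ ee := by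
  unfold ee
  exact (differentiable_id.const_mul _).cexp

lemma ee_neg_diff : Differentiable ℂ (fun z => (ee z)⁻¹) := by
  have : (fun z : ℂ => (ee z)⁻¹) = fun z => ee (-z) := funext fun z => ee_inv z
  rw [this]
  exact ee_diff.comp differentiable_neg
/-! ### The pieces of `Phi` -/

noncomputable def SS (z : ℂ) : ℂ :=
  Complex.exp (Real.pi * Complex.I * z) - Complex.exp (-(Real.pi * Complex.I * z))

noncomputable def PP (σ z : ℂ) : ℂ :=
  ∏' k : ℕ, ((1 - ee z * ee σ ^ (k + 1)) * (1 - (ee z)⁻¹ * ee σ ^ (k + 1)) /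
      (1 - ee σ ^ (k + 1)) ^ 2)

lemma Phi_eq (z σ : ℂ) : Phi z σ = SS z * PP σ z := rfl

lemma SS_diff : Differentiable ℂ SS := by
  unfold SS
  exact ((differentiable_id.const_mul _).cexp).sub
    ((differentiable_id.const_mul _).neg.cexp)

lemma SS_eq (z : ℂ) : SS z = Complex.exp (-(Real.pi * Complex.I * z)) * (ee z - 1) := by
  rw [SS, ee, mul_sub, ← Complex.exp_add]
  ring_nf

lemma SS_zero : SS 0 = 0 := by simp [SS]

lemma norm_ee_le {R : ℝ} {z : ℂ} (hz : ‖z‖ ≤ R) :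
    ‖ee z‖ ≤ Real.exp (2 * Real.pi * R) := by
  rw [norm_ee]
  apply Real.exp_le_exp.mpr
  have h1 : |z.im| ≤ ‖z‖ := Complex.abs_im_le_norm z
  have := Real.pi_pos
  have h2 := abs_le.mp h1
  nlinarith

lemma norm_ee_inv_le {R : ℝ} {z : ℂ} (hz : ‖z‖ ≤ R) :
    ‖(ee z)⁻¹‖ ≤ Real.exp (2 * Real.pi * R) := by
  rw [ee_inv]
  apply norm_ee_le
  simpa using hz

/-- The factors of the product `PP`. -/
noncomputable def gg (σ : ℂ) (k : ℕ) (z : ℂ) : ℂ :=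
  (1 - ee z * ee σ ^ (k + 1)) * (1 - (ee z)⁻¹ * ee σ ^ (k + 1)) / (1 - ee σ ^ (k + 1)) ^ 2

lemma gg_diff {σ : ℂ} (k : ℕ) : Differentiable ℂ (gg σ k) := by
  apply Differentiable.div_const
  exact ((differentiable_const _).sub (ee_diff.mul_const _)).mul
    ((differentiable_const _).sub (ee_neg_diff.mul_const _))

section Sigma

variable {σ : ℂ} (hσ : 0 < σ.im)
include hσ

lemma qpow_norm_lt (k : ℕ) : ‖ee σ ^ (k + 1)‖ < 1 := by
  rw [norm_pow]
  exact pow_lt_one₀ (norm_nonneg _) (norm_ee_lt_one hσ) (Nat.succ_ne_zero k)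

lemma qpow_ne (k : ℕ) : 1 - ee σ ^ (k + 1) ≠ 0 := by
  intro h
  have h1 : ee σ ^ (k + 1) = 1 := by linear_combination -h
  have h2 := qpow_norm_lt hσ k
  rw [h1] at h2
  simp at h2

lemma qpow_norm_le (k : ℕ) : ‖ee σ ^ (k + 1)‖ ≤ ‖ee σ‖ := by
  rw [norm_pow]
  calc ‖ee σ‖ ^ (k + 1) ≤ ‖ee σ‖ ^ 1 :=
        pow_le_pow_of_le_one (norm_nonneg _) (norm_ee_lt_one hσ).le (by omega)
    _ = ‖ee σ‖ := pow_one _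

lemma norm_one_sub_qpow (k : ℕ) : 1 - ‖ee σ‖ ≤ ‖1 - ee σ ^ (k + 1)‖ := by
  calc 1 - ‖ee σ‖ ≤ 1 - ‖ee σ ^ (k + 1)‖ := by linarith [qpow_norm_le hσ k]
    _ ≤ ‖1 - ee σ ^ (k + 1)‖ := by
        have := norm_sub_norm_le (1 : ℂ) (ee σ ^ (k + 1))
        simpa using this

/-- summability of the geometric bound -/
lemma geom_summable : Summable (fun k : ℕ => ‖ee σ‖ ^ (k + 1)) := by
  have := summable_geometric_of_lt_one (norm_nonneg (ee σ)) (norm_ee_lt_one hσ)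
  simpa [pow_succ, mul_comm] using this.mul_right ‖ee σ‖

lemma gg_sub_one (k : ℕ) (z : ℂ) :
    gg σ k z - 1 = (2 * ee σ ^ (k + 1) - ee z * ee σ ^ (k + 1) -
      (ee z)⁻¹ * ee σ ^ (k + 1)) / (1 - ee σ ^ (k + 1)) ^ 2 := by
  have h1 : ee z ≠ 0 := ee_ne_zero z
  have hc2 : (1 - ee σ ^ (k + 1)) ^ 2 ≠ 0 := pow_ne_zero 2 (qpow_ne hσ k)
  have key : (1 - ee z * ee σ ^ (k + 1)) * (1 - (ee z)⁻¹ * ee σ ^ (k + 1)) =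
      (1 - ee σ ^ (k + 1)) ^ 2 + (2 * ee σ ^ (k + 1) - ee z * ee σ ^ (k + 1) -
        (ee z)⁻¹ * ee σ ^ (k + 1)) := by
    linear_combination (ee σ ^ (k + 1)) ^ 2 * (mul_inv_cancel₀ h1)
  rw [gg, key, add_div, div_self hc2, add_sub_cancel_left]

lemma gg_bound :
    ∀ R : ℝ, 0 < R → ∃ u : ℕ → ℝ, Summable u ∧
      ∀ (k : ℕ), ∀ z : ℂ, ‖z‖ ≤ R → ‖gg σ k z - 1‖ ≤ u k := by
  intro R hR
  set M : ℝ := Real.exp (2 * Real.pi * R) with hMdef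
  refine ⟨fun k => ((2 + 2 * M) / (1 - ‖ee σ‖) ^ 2) * ‖ee σ‖ ^ (k + 1),
    (geom_summable hσ).mul_left _, ?_⟩
  intro k z hz
  rw [gg_sub_one hσ, norm_div]
  have hden : (1 - ‖ee σ‖) ^ 2 ≤ ‖(1 - ee σ ^ (k + 1)) ^ 2‖ := by
    rw [norm_pow]
    have h1 := norm_one_sub_qpow hσ k
    have h2 : 0 ≤ 1 - ‖ee σ‖ := by linarith [norm_ee_lt_one hσ]
    nlinarith
  have hnum : ‖2 * ee σ ^ (k + 1) - ee z * ee σ ^ (k + 1) - (ee z)⁻¹ * ee σ ^ (k + 1)‖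
      ≤ (2 + 2 * M) * ‖ee σ‖ ^ (k + 1) := by
    have e1 : ‖ee z‖ ≤ M := norm_ee_le hz
    have e2 : ‖(ee z)⁻¹‖ ≤ M := norm_ee_inv_le hz
    have hq : ‖ee σ ^ (k + 1)‖ = ‖ee σ‖ ^ (k + 1) := norm_pow _ _
    calc ‖2 * ee σ ^ (k + 1) - ee z * ee σ ^ (k + 1) - (ee z)⁻¹ * ee σ ^ (k + 1)‖
        ≤ ‖2 * ee σ ^ (k + 1) - ee z * ee σ ^ (k + 1)‖ + ‖(ee z)⁻¹ * ee σ ^ (k + 1)‖ :=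
          norm_sub_le _ _
      _ ≤ ‖(2 : ℂ) * ee σ ^ (k + 1)‖ + ‖ee z * ee σ ^ (k + 1)‖ +
            ‖(ee z)⁻¹ * ee σ ^ (k + 1)‖ := by linarith [norm_sub_le (2 * ee σ ^ (k + 1)) (ee z * ee σ ^ (k + 1))]
      _ ≤ (2 + 2 * M) * ‖ee σ‖ ^ (k + 1) := by
          rw [norm_mul, norm_mul, norm_mul, hq]
          have hqn : (0:ℝ) ≤ ‖ee σ‖ ^ (k + 1) := by positivity
          have : ‖(2:ℂ)‖ = 2 := by norm_num
          nlinarith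
  have hdenpos : (0:ℝ) < (1 - ‖ee σ‖) ^ 2 := by
    have := norm_ee_lt_one hσ
    exact pow_pos (by linarith) 2
  have hM : (0:ℝ) < M := Real.exp_pos _
  show _ ≤ (2 + 2 * M) / (1 - ‖ee σ‖) ^ 2 * ‖ee σ‖ ^ (k + 1)
  rw [div_mul_eq_mul_div]
  refine div_le_div₀ (mul_nonneg (by nlinarith) (by positivity)) hnum hdenpos hden

omit hσ in
lemma PP_as_master (z : ℂ) : PP σ z = ∏' k, (1 + (gg σ k z - 1)) := by
  unfold PP
  congr 1
  funext k
  rw [gg]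
  ring

lemma PP_diff : Differentiable ℂ (PP σ) := by
  have h := master_diff (v := fun k z => gg σ k z - 1)
    (fun k => (gg_diff k).sub_const 1) (gg_bound hσ)
  have : PP σ = fun z => ∏' k, (1 + (gg σ k z - 1)) := funext fun z => PP_as_master z
  rw [this]
  exact h

lemma PP_ne_zero {z : ℂ} (hz : ∀ k, gg σ k z ≠ 0) : PP σ z ≠ 0 := by
  rw [PP_as_master]
  have := master_ne_zero (v := fun k z => gg σ k z - 1)
    (fun k => (gg_diff k).sub_const 1) (gg_bound hσ) z
  apply this
  intro k
  simpa using hz k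

lemma PP_zero : PP σ 0 = 1 := by
  unfold PP
  have : ∀ k : ℕ, (1 - ee 0 * ee σ ^ (k + 1)) * (1 - (ee 0)⁻¹ * ee σ ^ (k + 1)) /
      (1 - ee σ ^ (k + 1)) ^ 2 = 1 := by
    intro k
    rw [ee_zero]
    simp only [one_mul, inv_one]
    rw [← sq]
    exact div_self (pow_ne_zero 2 (qpow_ne hσ k))
  simp only [this]
  exact tprod_one

/-! ### The lattice `ℤ + ℤσ` -/

def ZLat (σ : ℂ) : Set ℂ := {w | ∃ m n : ℤ, w = (m : ℂ) + n * σ}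

omit hσ in
lemma lat_zero : (0 : ℂ) ∈ ZLat σ := ⟨0, 0, by simp⟩

omit hσ in
lemma lat_countable : (ZLat σ).Countable := by
  have : ZLat σ = Set.range (fun p : ℤ × ℤ => (p.1 : ℂ) + p.2 * σ) := by
    ext w
    constructor
    · rintro ⟨m, n, rfl⟩; exact ⟨(m, n), rfl⟩
    · rintro ⟨⟨m, n⟩, rfl⟩; exact ⟨m, n, rfl⟩
  rw [this]
  exact Set.countable_range _

omit hσ in
lemma lat_dense_compl : Dense (ZLat σ)ᶜ := lat_countable.dense_compl ℂ

omit hσ in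
lemma lat_sub {w w' : ℂ} (hw : w ∈ ZLat σ) (hw' : w' ∈ ZLat σ) : w - w' ∈ ZLat σ := by
  obtain ⟨m, n, rfl⟩ := hw
  obtain ⟨m', n', rfl⟩ := hw'
  exact ⟨m - m', n - n', by push_cast; ring⟩

lemma lat_norm_lb {w : ℂ} (hw : w ∈ ZLat σ) (h0 : w ≠ 0) : min 1 σ.im ≤ ‖w‖ := by
  obtain ⟨m, n, rfl⟩ := hw
  by_cases hn : n = 0
  · subst hn
    have hm : m ≠ 0 := by
      intro h; apply h0; simp [h]
    have h1 : (1 : ℝ) ≤ |(m : ℝ)| := by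
      rw [← Int.cast_abs]
      exact_mod_cast Int.one_le_abs (by simpa using hm)
    have h2 : ‖((m : ℂ) + (0 : ℤ) * σ)‖ = |(m : ℝ)| := by
      push_cast
      simp [Complex.norm_real]
    rw [h2]
    exact le_trans (min_le_left _ _) h1
  · have him : ((m : ℂ) + n * σ).im = n * σ.im := by
      simp [Complex.add_im, Complex.mul_im]
    have h1 : σ.im ≤ |n * σ.im| := by
      rw [abs_mul]
      have : (1 : ℝ) ≤ |(n : ℝ)| := by
        rw [← Int.cast_abs]
        exact_mod_cast Int.one_le_abs hn
      have h2 : |σ.im| = σ.im := abs_of_pos hσ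
      nlinarith [abs_nonneg (n : ℝ), hσ]
    calc min 1 σ.im ≤ σ.im := min_le_right _ _
      _ ≤ |n * σ.im| := h1
      _ = |((m : ℂ) + n * σ).im| := by rw [him]
      _ ≤ ‖(m : ℂ) + n * σ‖ := Complex.abs_im_le_norm _

lemma lat_separated {w p : ℂ} (hw : w ∈ ZLat σ) (hp : p ∈ ZLat σ) (hne : w ≠ p) :
    min 1 σ.im ≤ dist w p := by
  rw [dist_eq_norm]
  exact lat_norm_lb hσ (lat_sub hw hp) (sub_ne_zero.mpr hne)

lemma lat_delta_pos : 0 < min 1 σ.im := lt_min one_pos hσ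

lemma eventually_not_lat {z : ℂ} (hz : z ∉ ZLat σ) : ∀ᶠ w in nhds z, w ∉ ZLat σ := by
  set δ := min 1 σ.im
  have hδ : 0 < δ := lat_delta_pos hσ
  rw [Metric.eventually_nhds_iff]
  by_cases hex : ∃ p ∈ ZLat σ, dist p z < δ / 2
  · obtain ⟨p, hpL, hpz⟩ := hex
    have hpzne : p ≠ z := fun h => hz (h ▸ hpL)
    have hdpos : 0 < dist p z := dist_pos.mpr hpzne
    refine ⟨min (δ / 2) (dist p z), lt_min (by linarith) hdpos, ?_⟩
    intro w hw hwL
    by_cases hwp : w = p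
    · subst hwp
      have := lt_of_lt_of_le hw (min_le_right _ _)
      rw [dist_comm] at this
      exact lt_irrefl _ this
    · have h1 : δ ≤ dist w p := lat_separated hσ hwL hpL hwp
      have h2 : dist w p ≤ dist w z + dist z p := dist_triangle _ _ _
      have h3 : dist w z < δ / 2 := lt_of_lt_of_le hw (min_le_left _ _)
      rw [dist_comm z p] at h2
      linarith
  · push_neg at hex
    refine ⟨δ / 2, by linarith, ?_⟩
    intro w hw hwL
    exact absurd hw (not_lt.mpr (hex w hwL))

lemma eventually_lat_only {p : ℂ} (hp : p ∈ ZLat σ) :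
    ∀ᶠ w in nhds p, w ∈ ZLat σ → w = p := by
  rw [Metric.eventually_nhds_iff]
  refine ⟨min 1 σ.im, lat_delta_pos hσ, ?_⟩
  intro w hw hwL
  by_contra hne
  exact absurd hw (not_lt.mpr (lat_separated hσ hwL hp hne))

/-! ### Nonvanishing off the lattice -/

omit hσ in
lemma ee_pow (n : ℕ) : ee σ ^ n = ee (n * σ) := by
  rw [ee, ee, ← Complex.exp_nat_mul]
  ring_nf

lemma factor_a_ne {z : ℂ} (hz : z ∉ ZLat σ) (k : ℕ) : 1 - ee z * ee σ ^ (k + 1) ≠ 0 := by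
  intro h
  have h1 : ee (z + ((k + 1 : ℕ) : ℂ) * σ) = 1 := by
    rw [ee_add, ← ee_pow]
    linear_combination -h
  obtain ⟨m, hm⟩ := ee_eq_one_iff.mp h1
  exact hz ⟨m, -(k + 1 : ℤ), by push_cast at hm ⊢; linear_combination hm⟩

lemma factor_b_ne {z : ℂ} (hz : z ∉ ZLat σ) (k : ℕ) : 1 - (ee z)⁻¹ * ee σ ^ (k + 1) ≠ 0 := by
  intro h
  have h1 : ee (-z + ((k + 1 : ℕ) : ℂ) * σ) = 1 := by
    rw [ee_add, ← ee_inv, ← ee_pow]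
    linear_combination -h
  obtain ⟨m, hm⟩ := ee_eq_one_iff.mp h1
  exact hz ⟨-m, (k + 1 : ℤ), by push_cast at hm ⊢; linear_combination -hm⟩

lemma ee_ne_one {z : ℂ} (hz : z ∉ ZLat σ) : ee z ≠ 1 := by
  intro h
  obtain ⟨m, hm⟩ := ee_eq_one_iff.mp h
  exact hz ⟨m, 0, by simp [hm]⟩

lemma gg_ne_zero {z : ℂ} (hz : z ∉ ZLat σ) (k : ℕ) : gg σ k z ≠ 0 :=
  div_ne_zero (mul_ne_zero (factor_a_ne hσ hz k) (factor_b_ne hσ hz k))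
    (pow_ne_zero 2 (qpow_ne hσ k))

lemma SS_ne_zero {z : ℂ} (hz : z ∉ ZLat σ) : SS z ≠ 0 := by
  rw [SS_eq]
  exact mul_ne_zero (Complex.exp_ne_zero _) (sub_ne_zero.mpr (ee_ne_one hσ hz))

lemma Phi_ne_zero {z : ℂ} (hz : z ∉ ZLat σ) : Phi z σ ≠ 0 := by
  rw [Phi_eq]
  exact mul_ne_zero (SS_ne_zero hσ hz) (PP_ne_zero hσ (gg_ne_zero hσ hz))

/-! ### Multipliable families and the product splitting -/

noncomputable def AA (σ x : ℂ) : ℂ := ∏' k : ℕ, (1 - x * ee σ ^ (k + 1))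

noncomputable def CC (σ : ℂ) : ℂ := ∏' k : ℕ, ((1 - ee σ ^ (k + 1)) ^ 2)⁻¹

lemma multA (x : ℂ) : Multipliable (fun k : ℕ => 1 - x * ee σ ^ (k + 1)) := by
  have h : Summable (fun k : ℕ => -(x * ee σ ^ (k + 1))) := by
    apply Summable.of_norm_bounded (g := fun k => ‖x‖ * ‖ee σ‖ ^ (k + 1))
      ((geom_summable hσ).mul_left _)
    intro k
    simp [norm_mul, norm_pow]
  have := multipliable_one_add h
  apply this.congr
  intro k
  ring

lemma multC : Multipliable (fun k : ℕ => ((1 - ee σ ^ (k + 1)) ^ 2)⁻¹) := by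
  have h : Summable (fun k : ℕ => ((1 - ee σ ^ (k + 1)) ^ 2)⁻¹ - 1) := by
    apply Summable.of_norm_bounded
      (g := fun k => 3 / (1 - ‖ee σ‖) ^ 2 * ‖ee σ‖ ^ (k + 1)) ((geom_summable hσ).mul_left _)
    intro k
    have hc2 : (1 - ee σ ^ (k + 1)) ^ 2 ≠ 0 := pow_ne_zero 2 (qpow_ne hσ k)
    have key : ((1 - ee σ ^ (k + 1)) ^ 2)⁻¹ - 1 =
        (2 * ee σ ^ (k + 1) - (ee σ ^ (k + 1)) ^ 2) / (1 - ee σ ^ (k + 1)) ^ 2 := by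
      rw [inv_eq_one_div, div_sub_one hc2]
      ring
    rw [key, norm_div]
    have hden : (1 - ‖ee σ‖) ^ 2 ≤ ‖(1 - ee σ ^ (k + 1)) ^ 2‖ := by
      rw [norm_pow]
      have h1 := norm_one_sub_qpow hσ k
      have h2 : 0 ≤ 1 - ‖ee σ‖ := by linarith [norm_ee_lt_one hσ]
      nlinarith
    have hdenpos : (0:ℝ) < (1 - ‖ee σ‖) ^ 2 := by
      have := norm_ee_lt_one hσ
      exact pow_pos (by linarith) 2
    have hnum : ‖2 * ee σ ^ (k + 1) - (ee σ ^ (k + 1)) ^ 2‖ ≤ 3 * ‖ee σ‖ ^ (k + 1) := by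
      have h1 : ‖ee σ ^ (k + 1)‖ = ‖ee σ‖ ^ (k + 1) := norm_pow _ _
      have h2 : ‖ee σ‖ ^ (k + 1) ≤ 1 := by
        apply pow_le_one₀ (norm_nonneg _) (norm_ee_lt_one hσ).le
      calc ‖2 * ee σ ^ (k + 1) - (ee σ ^ (k + 1)) ^ 2‖
          ≤ ‖(2:ℂ) * ee σ ^ (k + 1)‖ + ‖(ee σ ^ (k + 1)) ^ 2‖ := norm_sub_le _ _
        _ = 2 * ‖ee σ‖ ^ (k + 1) + (‖ee σ‖ ^ (k + 1)) ^ 2 := by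
            simp [norm_mul, norm_pow]
        _ ≤ 3 * ‖ee σ‖ ^ (k + 1) := by nlinarith [pow_nonneg (norm_nonneg (ee σ)) (k + 1)]
    rw [div_mul_eq_mul_div]
    exact div_le_div₀ (by positivity) hnum hdenpos hden
  have := multipliable_one_add h
  apply this.congr
  intro k
  ring

lemma PP_split (z : ℂ) : PP σ z =
    AA σ (ee z) * (AA σ ((ee z)⁻¹) * CC σ) := by
  rw [PP, AA, AA, CC]
  have hre : ∀ k : ℕ, (1 - ee z * ee σ ^ (k + 1)) * (1 - (ee z)⁻¹ * ee σ ^ (k + 1)) /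
      (1 - ee σ ^ (k + 1)) ^ 2 =
      (1 - ee z * ee σ ^ (k + 1)) * ((1 - (ee z)⁻¹ * ee σ ^ (k + 1)) *
        ((1 - ee σ ^ (k + 1)) ^ 2)⁻¹) := by
    intro k
    rw [div_eq_mul_inv, mul_assoc]
  rw [tprod_congr hre]
  rw [Multipliable.tprod_mul (multA hσ (ee z)) ((multA hσ ((ee z)⁻¹)).mul (multC hσ))]
  rw [Multipliable.tprod_mul (multA hσ ((ee z)⁻¹)) (multC hσ)]

lemma AA_shift (x : ℂ) : AA σ x = (1 - x * ee σ) * AA σ (x * ee σ) := by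
  have hm : Multipliable (fun n : ℕ => 1 - x * ee σ ^ (n + 1 + 1)) := by
    apply (multA hσ (x * ee σ)).congr
    intro k
    rw [pow_succ']
    ring
  rw [AA, tprod_eq_zero_mul' hm]
  congr 1
  · rw [pow_one]
  · rw [AA]
    apply tprod_congr
    intro k
    rw [pow_succ']
    ring

lemma BB_shift {x : ℂ} (hx : x ≠ 0) :
    AA σ ((x * ee σ)⁻¹) = (1 - x⁻¹) * AA σ x⁻¹ := by
  have hq : ee σ ≠ 0 := ee_ne_zero σ
  have hre : ∀ k : ℕ, (1 - (x * ee σ)⁻¹ * ee σ ^ (k + 1)) = 1 - x⁻¹ * ee σ ^ k := by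
    intro k
    rw [mul_inv, pow_succ']
    field_simp
  rw [AA, tprod_congr hre]
  have hm : Multipliable (fun n : ℕ => 1 - x⁻¹ * ee σ ^ (n + 1)) := multA hσ _
  rw [tprod_eq_zero_mul' hm]
  rw [pow_zero, mul_one, AA]

/-! ### Quasi-periodicity -/

omit hσ in
lemma SS_period (z : ℂ) : SS (z + 1) = -SS z := by
  rw [SS, SS]
  rw [show (Real.pi : ℂ) * Complex.I * (z + 1) = Real.pi * Complex.I * z + Real.pi * Complex.I
    by ring]
  rw [show -((Real.pi : ℂ) * Complex.I * z + Real.pi * Complex.I) =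
    -(Real.pi * Complex.I * z) + -(Real.pi * Complex.I) by ring]
  rw [Complex.exp_add, Complex.exp_add, Complex.exp_neg (Real.pi * Complex.I),
    Complex.exp_pi_mul_I]
  ring

omit hσ in
lemma Phi_period_one (z : ℂ) : Phi (z + 1) σ = -Phi z σ := by
  rw [Phi_eq, Phi_eq, SS_period]
  have : PP σ (z + 1) = PP σ z := by
    rw [PP, PP]
    apply tprod_congr
    intro k
    rw [ee_add, ee_one, mul_one]
  rw [this]
  ring

lemma Phi_period_sigma {z : ℂ} (hz : z ∉ ZLat σ) :
    Phi (z + σ) σ =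
      -(Complex.exp (-(Real.pi * Complex.I * σ)) * (ee z)⁻¹) * Phi z σ := by
  have hx : ee z ≠ 0 := ee_ne_zero z
  have hq1 : 1 - ee z * ee σ ≠ 0 := by
    intro h
    have h1 : ee (z + σ) = 1 := by rw [ee_add]; linear_combination -h
    obtain ⟨m, hm⟩ := ee_eq_one_iff.mp h1
    exact hz ⟨m, -1, by push_cast; linear_combination hm⟩
  apply mul_left_cancel₀ hq1
  have hSzs : SS (z + σ) = Complex.exp (-(Real.pi * Complex.I * z)) *
      Complex.exp (-(Real.pi * Complex.I * σ)) * (ee z * ee σ - 1) := by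
    rw [SS_eq, ee_add, show -((Real.pi : ℂ) * Complex.I * (z + σ)) =
      -(Real.pi * Complex.I * z) + -(Real.pi * Complex.I * σ) by ring, Complex.exp_add]
  have hSz : SS z = Complex.exp (-(Real.pi * Complex.I * z)) * (ee z - 1) := SS_eq z
  rw [Phi_eq, Phi_eq, PP_split hσ, PP_split hσ, ee_add, hSzs, hSz]
  rw [BB_shift hσ hx, AA_shift hσ (ee z)]
  field_simp
  ring

lemma Phi_diff2 : Differentiable ℂ (fun z => Phi z σ) := by
  have hfun : (fun z => Phi z σ) = fun z => SS z * PP σ z := rfl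
  rw [hfun]
  exact SS_diff.mul (PP_diff hσ)

omit hσ in
lemma hasDerivAt_SS0 : HasDerivAt SS (2 * Real.pi * Complex.I) 0 := by
  have h1 : HasDerivAt (fun z : ℂ => Complex.exp (Real.pi * Complex.I * z))
      ((Real.pi : ℂ) * Complex.I) 0 := by
    have := (((hasDerivAt_id (0:ℂ)).const_mul ((Real.pi : ℂ) * Complex.I))).cexp
    simpa using this
  have h2 : HasDerivAt (fun z : ℂ => Complex.exp (-(Real.pi * Complex.I * z)))
      (-((Real.pi : ℂ) * Complex.I)) 0 := by
    have := (((hasDerivAt_id (0:ℂ)).const_mul ((Real.pi : ℂ) * Complex.I)).neg).cexp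
    simpa using this
  have := h1.sub h2
  rw [show (2 * Real.pi * Complex.I : ℂ) = Real.pi * Complex.I - -(Real.pi * Complex.I) by ring]
  exact this

lemma hasDerivAt_Phi0 : HasDerivAt (fun z => Phi z σ) (2 * Real.pi * Complex.I) 0 := by
  have hfun : (fun z => Phi z σ) = fun z => SS z * PP σ z := rfl
  rw [hfun]
  have hP : HasDerivAt (PP σ) (deriv (PP σ) 0) 0 := ((PP_diff hσ) 0).hasDerivAt
  have := hasDerivAt_SS0.mul hP
  rw [SS_zero, PP_zero hσ] at this
  simpa [Pi.mul_def] using this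

/-- The sigma-period multiplier. -/
noncomputable def mulσ (σ z : ℂ) : ℂ := -(Complex.exp (-(Real.pi * Complex.I * σ)) * (ee z)⁻¹)

omit hσ in
lemma mulσ_ne_zero (z : ℂ) : mulσ σ z ≠ 0 := by
  rw [mulσ]
  simp [Complex.exp_ne_zero, ee_ne_zero]

omit hσ in
lemma mulσ_diff : Differentiable ℂ (mulσ σ) := by
  unfold mulσ
  exact (ee_neg_diff.const_mul _).neg

lemma Phi_period_sigma_all (z : ℂ) :
    Phi (z + σ) σ = mulσ σ z * Phi z σ := by
  have hc1 : Continuous (fun z => Phi (z + σ) σ) :=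
    ((Phi_diff2 hσ).comp (differentiable_id.add_const σ)).continuous
  have hc2 : Continuous (fun z => mulσ σ z * Phi z σ) :=
    ((mulσ_diff).mul (Phi_diff2 hσ)).continuous
  have heq : Set.EqOn (fun z => Phi (z + σ) σ) (fun z => mulσ σ z * Phi z σ) (ZLat σ)ᶜ :=
    fun w hw => Phi_period_sigma hσ hw
  exact congrFun (Continuous.ext_on lat_dense_compl hc1 hc2 heq) z

lemma deriv_period_one (p : ℂ) :
    deriv (fun z => Phi z σ) (p + 1) = -deriv (fun z => Phi z σ) p := by
  have h1 := deriv_comp_add_const (fun z => Phi z σ) 1 p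
  have hfun : (fun z => Phi (z + 1) σ) = fun z => -Phi z σ := funext (Phi_period_one)
  rw [← h1]
  show deriv (fun z => Phi (z + 1) σ) p = _
  rw [hfun, deriv.fun_neg]

lemma deriv_period_sigma {p : ℂ} (hp : Phi p σ = 0) :
    deriv (fun z => Phi z σ) (p + σ) = mulσ σ p * deriv (fun z => Phi z σ) p := by
  have h1 := deriv_comp_add_const (fun z => Phi z σ) σ p
  have hfun : (fun z => Phi (z + σ) σ) = fun z => mulσ σ z * Phi z σ :=
    funext (Phi_period_sigma_all hσ)
  rw [← h1]
  show deriv (fun z => Phi (z + σ) σ) p = _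
  rw [hfun, deriv_fun_mul (mulσ_diff p) ((Phi_diff2 hσ) p), hp, mul_zero, zero_add]

lemma Phi_lat : ∀ (m n : ℤ), Phi ((m : ℂ) + n * σ) σ = 0 ∧
    deriv (fun z => Phi z σ) ((m : ℂ) + n * σ) ≠ 0 := by
  have base : Phi (0 : ℂ) σ = 0 ∧ deriv (fun z => Phi z σ) 0 ≠ 0 := by
    constructor
    · rw [Phi_eq, SS_zero, zero_mul]
    · rw [(hasDerivAt_Phi0 hσ).deriv]
      simp [Real.pi_ne_zero, Complex.I_ne_zero]
  have stepσ_up : ∀ p : ℂ, (Phi p σ = 0 ∧ deriv (fun z => Phi z σ) p ≠ 0) →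
      (Phi (p + σ) σ = 0 ∧ deriv (fun z => Phi z σ) (p + σ) ≠ 0) := by
    rintro p ⟨h0, hd⟩
    refine ⟨by rw [Phi_period_sigma_all hσ, h0, mul_zero], ?_⟩
    rw [deriv_period_sigma hσ h0]
    exact mul_ne_zero (mulσ_ne_zero p) hd
  have stepσ_down : ∀ p : ℂ, (Phi p σ = 0 ∧ deriv (fun z => Phi z σ) p ≠ 0) →
      (Phi (p - σ) σ = 0 ∧ deriv (fun z => Phi z σ) (p - σ) ≠ 0) := by
    rintro p ⟨h0, hd⟩
    have he : p - σ + σ = p := by ring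
    have h0' : Phi (p - σ) σ = 0 := by
      have := Phi_period_sigma_all hσ (p - σ)
      rw [he, h0] at this
      exact (mul_eq_zero.mp this.symm).resolve_left (mulσ_ne_zero _)
    refine ⟨h0', ?_⟩
    intro hcon
    have := deriv_period_sigma hσ h0'
    rw [he, hcon, mul_zero] at this
    exact hd this
  have step1_up : ∀ p : ℂ, (Phi p σ = 0 ∧ deriv (fun z => Phi z σ) p ≠ 0) →
      (Phi (p + 1) σ = 0 ∧ deriv (fun z => Phi z σ) (p + 1) ≠ 0) := by
    rintro p ⟨h0, hd⟩
    refine ⟨by rw [Phi_period_one, h0, neg_zero], ?_⟩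
    rw [deriv_period_one hσ]
    simpa using hd
  have step1_down : ∀ p : ℂ, (Phi p σ = 0 ∧ deriv (fun z => Phi z σ) p ≠ 0) →
      (Phi (p - 1) σ = 0 ∧ deriv (fun z => Phi z σ) (p - 1) ≠ 0) := by
    rintro p ⟨h0, hd⟩
    have he : p - 1 + 1 = p := by ring
    have h0' : Phi (p - 1) σ = 0 := by
      have := Phi_period_one (σ := σ) (p - 1)
      rw [he, h0] at this
      simpa using this.symm
    refine ⟨h0', ?_⟩
    intro hcon
    have := deriv_period_one hσ (p - 1)
    rw [he, hcon, neg_zero] at this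
    exact hd this
  have key_n : ∀ n : ℤ, Phi ((n : ℂ) * σ) σ = 0 ∧
      deriv (fun z => Phi z σ) ((n : ℂ) * σ) ≠ 0 := by
    intro n
    induction n using Int.induction_on with
    | zero => simpa using base
    | succ k ih =>
        have := stepσ_up _ ih
        have he : ((k : ℂ) + 1) * σ = (k : ℂ) * σ + σ := by ring
        rw [show (((k : ℤ) + 1 : ℤ) : ℂ) = (k : ℂ) + 1 by push_cast; ring, he]
        exact this
    | pred k ih =>
        have := stepσ_down _ ih
        have he : (-(k : ℂ) - 1) * σ = (-(k : ℂ)) * σ - σ := by ring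
        rw [show ((-(k : ℤ) - 1 : ℤ) : ℂ) = -(k : ℂ) - 1 by push_cast; ring, he]
        simpa using this
  intro m n
  induction m using Int.induction_on with
  | zero => simpa using key_n n
  | succ k ih =>
      have := step1_up _ ih
      rw [show (((k : ℤ) + 1 : ℤ) : ℂ) + n * σ = ((k : ℤ) : ℂ) + n * σ + 1 by push_cast; ring]
      exact this
  | pred k ih =>
      have := step1_down _ ih
      rw [show ((-(k : ℤ) - 1 : ℤ) : ℂ) + n * σ = ((-(k : ℤ) : ℤ) : ℂ) + n * σ - 1
        by push_cast; ring]
      exact this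

lemma Phi_lat_zero {p : ℂ} (hp : p ∈ ZLat σ) :
    Phi p σ = 0 ∧ deriv (fun z => Phi z σ) p ≠ 0 := by
  obtain ⟨m, n, rfl⟩ := hp
  exact Phi_lat hσ m n

end Sigma

section Main

variable {τ : ℂ} (hτ : 0 < τ.im)
include hτ

lemma tau_ne_zero : τ ≠ 0 := by
  intro h
  rw [h] at hτ
  simp at hτ

lemma tau'_im : 0 < (-1 / τ).im := by
  have h0 : τ ≠ 0 := tau_ne_zero hτ
  have : (-1 / τ) = -τ⁻¹ := by field_simp
  rw [this, Complex.neg_im, Complex.inv_im]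
  have hn : 0 < Complex.normSq τ := Complex.normSq_pos.mpr h0
  rw [neg_div, neg_neg]
  positivity

/-- The transformed function. -/
noncomputable def FF (τ z : ℂ) : ℂ := Phi (z / τ) (-1 / τ)

/-- The expected transformation target. -/
noncomputable def GG (τ z : ℂ) : ℂ :=
  τ⁻¹ * Complex.exp (Real.pi * Complex.I * z ^ 2 / τ) * Phi z τ

lemma FF_diff : Differentiable ℂ (FF τ) :=
  (Phi_diff2 (tau'_im hτ)).comp (differentiable_id.div_const τ)

lemma EE_diff : Differentiable ℂ (fun z : ℂ => Complex.exp (Real.pi * Complex.I * z ^ 2 / τ)) :=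
  (((differentiable_pow 2).const_mul _).div_const _).cexp

lemma GG_diff : Differentiable ℂ (GG τ) := by
  unfold GG
  exact ((differentiable_const _).mul (EE_diff hτ)).mul (Phi_diff2 hτ)

lemma lat_corr {z : ℂ} : z ∈ ZLat τ ↔ z / τ ∈ ZLat (-1 / τ) := by
  have h0 : τ ≠ 0 := tau_ne_zero hτ
  constructor
  · rintro ⟨m, n, rfl⟩
    refine ⟨n, -m, ?_⟩
    push_cast
    field_simp
    ring
  · rintro ⟨m, n, h⟩
    refine ⟨-n, m, ?_⟩
    have h2 : z = ((m : ℂ) + n * (-1 / τ)) * τ := by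
      rw [← h, div_mul_cancel₀ _ h0]
    push_cast
    rw [h2]
    field_simp
    ring

lemma FF_ne_zero {z : ℂ} (hz : z ∉ ZLat τ) : FF τ z ≠ 0 :=
  Phi_ne_zero (tau'_im hτ) (fun hc => hz ((lat_corr hτ).mpr hc))

lemma GG_ne_zero {z : ℂ} (hz : z ∉ ZLat τ) : GG τ z ≠ 0 :=
  mul_ne_zero (mul_ne_zero (inv_ne_zero (tau_ne_zero hτ)) (Complex.exp_ne_zero _))
    (Phi_ne_zero hτ hz)

lemma FF_lat_zero {p : ℂ} (hp : p ∈ ZLat τ) : FF τ p = 0 :=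
  (Phi_lat_zero (tau'_im hτ) ((lat_corr hτ).mp hp)).1

lemma GG_lat_zero {p : ℂ} (hp : p ∈ ZLat τ) : GG τ p = 0 := by
  unfold GG
  rw [(Phi_lat_zero hτ hp).1, mul_zero]

lemma GG_deriv_lat {p : ℂ} (hp : p ∈ ZLat τ) : deriv (GG τ) p ≠ 0 := by
  have hfun : GG τ = fun z => (τ⁻¹ * Complex.exp (Real.pi * Complex.I * z ^ 2 / τ)) *
      Phi z τ := by
    funext z
    rw [GG]
  rw [hfun, deriv_fun_mul (c := fun z => τ⁻¹ * Complex.exp (Real.pi * Complex.I * z ^ 2 / τ))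
    (((differentiable_const _).mul (EE_diff hτ)) p) ((Phi_diff2 hτ) p),
    (Phi_lat_zero hτ hp).1, mul_zero, zero_add]
  exact mul_ne_zero (mul_ne_zero (inv_ne_zero (tau_ne_zero hτ)) (Complex.exp_ne_zero _))
    (Phi_lat_zero hτ hp).2

open scoped Classical in
/-- The quotient, extended across the lattice by the ratio of derivatives. -/
noncomputable def HH (τ : ℂ) : ℂ → ℂ := fun z =>
  if z ∈ ZLat τ then deriv (FF τ) z / deriv (GG τ) z else FF τ z / GG τ z

lemma HH_diff : Differentiable ℂ (HH τ) := by
  intro p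
  by_cases hp : p ∈ ZLat τ
  · -- use dslopes
    obtain ⟨pF, hpF⟩ := (FF_diff hτ).analyticAt p
    obtain ⟨pG, hpG⟩ := (GG_diff hτ).analyticAt p
    have hD1 : DifferentiableAt ℂ (dslope (FF τ) p) p :=
      hpF.has_fpower_series_dslope_fslope.analyticAt.differentiableAt
    have hD2 : DifferentiableAt ℂ (dslope (GG τ) p) p :=
      hpG.has_fpower_series_dslope_fslope.analyticAt.differentiableAt
    have hD2p : dslope (GG τ) p p ≠ 0 := by
      rw [dslope_same]
      exact GG_deriv_lat hτ hp
    have hEq : (fun w => dslope (FF τ) p w / dslope (GG τ) p w) =ᶠ[nhds p] HH τ := by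
      filter_upwards [eventually_lat_only hτ hp] with w hw
      by_cases hwp : w = p
      · subst hwp
        rw [dslope_same, dslope_same, HH, if_pos hp]
      · have hwL : w ∉ ZLat τ := fun hc => hwp (hw hc)
        rw [HH, if_neg hwL, dslope_of_ne _ hwp, dslope_of_ne _ hwp, slope, slope, vsub_eq_sub, vsub_eq_sub,
          FF_lat_zero hτ hp, GG_lat_zero hτ hp, sub_zero, sub_zero, smul_eq_mul, smul_eq_mul,
          mul_div_mul_left _ _ (inv_ne_zero (sub_ne_zero.mpr hwp))]
    exact (Filter.EventuallyEq.differentiableAt_iff hEq).mp (hD1.div hD2 hD2p)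
  · have hEq : (fun w => FF τ w / GG τ w) =ᶠ[nhds p] HH τ := by
      filter_upwards [eventually_not_lat hτ hp] with w hw
      rw [HH, if_neg hw]
    exact (Filter.EventuallyEq.differentiableAt_iff hEq).mp
      (((FF_diff hτ) p).div ((GG_diff hτ) p) (GG_ne_zero hτ hp))

lemma lat_add_one {z : ℂ} (hz : z ∉ ZLat τ) : z + 1 ∉ ZLat τ := by
  intro h
  apply hz
  have h1 : (1 : ℂ) ∈ ZLat τ := ⟨1, 0, by simp⟩
  have := lat_sub h h1
  simpa using this

lemma lat_add_tau {z : ℂ} (hz : z ∉ ZLat τ) : z + τ ∉ ZLat τ := by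
  intro h
  apply hz
  have h1 : (τ : ℂ) ∈ ZLat τ := ⟨0, 1, by simp⟩
  have := lat_sub h h1
  simpa using this

lemma HH_per_one {z : ℂ} (hz : z ∉ ZLat τ) : HH τ (z + 1) = HH τ z := by
  have h0 : τ ≠ 0 := tau_ne_zero hτ
  have hz1 : z + 1 ∉ ZLat τ := lat_add_one hτ hz
  set u : ℂ := -(Complex.exp (Real.pi * Complex.I * (2 * z + 1) / τ)) with hu_def
  have hu : u ≠ 0 := by simp [hu_def, Complex.exp_ne_zero]
  have key : mulσ (-1 / τ) ((z + 1) / τ) * FF τ (z + 1) = FF τ z := by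
    rw [FF, FF]
    have h1 : z / τ = (z + 1) / τ + -1 / τ := by field_simp; ring
    rw [h1]
    exact (Phi_period_sigma_all (tau'_im hτ) ((z + 1) / τ)).symm
  have hum : mulσ (-1 / τ) ((z + 1) / τ) * u = 1 := by
    rw [mulσ, ee, ← Complex.exp_neg, ← Complex.exp_add, hu_def, neg_mul_neg,
      ← Complex.exp_add]
    rw [show -(Real.pi * Complex.I * (-1 / τ)) + -(2 * Real.pi * Complex.I * ((z + 1) / τ)) +
        Real.pi * Complex.I * (2 * z + 1) / τ = 0 by field_simp; ring]
    exact Complex.exp_zero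
  have hF : FF τ (z + 1) = u * FF τ z := by
    calc FF τ (z + 1) = (mulσ (-1 / τ) ((z + 1) / τ) * u) * FF τ (z + 1) := by
            rw [hum, one_mul]
      _ = u * (mulσ (-1 / τ) ((z + 1) / τ) * FF τ (z + 1)) := by ring
      _ = u * FF τ z := by rw [key]
  have hG : GG τ (z + 1) = u * GG τ z := by
    rw [GG, GG]
    rw [show Real.pi * Complex.I * (z + 1) ^ 2 / τ =
      Real.pi * Complex.I * z ^ 2 / τ + Real.pi * Complex.I * (2 * z + 1) / τ
      by field_simp; ring]
    rw [Complex.exp_add, Phi_period_one, hu_def]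
    ring
  rw [HH, HH, if_neg hz1, if_neg hz, hF, hG, mul_div_mul_left _ _ hu]

lemma HH_per_tau {z : ℂ} (hz : z ∉ ZLat τ) : HH τ (z + τ) = HH τ z := by
  have h0 : τ ≠ 0 := tau_ne_zero hτ
  have hzτ : z + τ ∉ ZLat τ := lat_add_tau hτ hz
  have hF : FF τ (z + τ) = -FF τ z := by
    rw [FF, FF, show (z + τ) / τ = z / τ + 1 by field_simp]
    exact Phi_period_one _
  have hG : GG τ (z + τ) = -GG τ z := by
    rw [GG, GG, Phi_period_sigma_all hτ z, mulσ, ee, ← Complex.exp_neg]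
    rw [show Real.pi * Complex.I * (z + τ) ^ 2 / τ =
      Real.pi * Complex.I * z ^ 2 / τ + (2 * Real.pi * Complex.I * z + Real.pi * Complex.I * τ)
      by field_simp; ring]
    rw [Complex.exp_add]
    have hcom : Complex.exp (2 * Real.pi * Complex.I * z + Real.pi * Complex.I * τ) *
        (Complex.exp (-(Real.pi * Complex.I * τ)) *
          Complex.exp (-(2 * Real.pi * Complex.I * z))) = 1 := by
      rw [← Complex.exp_add, ← Complex.exp_add, show 2 * Real.pi * Complex.I * z +
        Real.pi * Complex.I * τ + (-(Real.pi * Complex.I * τ) +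
        -(2 * Real.pi * Complex.I * z)) = 0 by ring]
      exact Complex.exp_zero
    calc τ⁻¹ * (Complex.exp (Real.pi * Complex.I * z ^ 2 / τ) *
          Complex.exp (2 * Real.pi * Complex.I * z + Real.pi * Complex.I * τ)) *
          (-(Complex.exp (-(Real.pi * Complex.I * τ)) *
            Complex.exp (-(2 * Real.pi * Complex.I * z))) * Phi z τ)
        = -(Complex.exp (2 * Real.pi * Complex.I * z + Real.pi * Complex.I * τ) *
            (Complex.exp (-(Real.pi * Complex.I * τ)) *
              Complex.exp (-(2 * Real.pi * Complex.I * z)))) *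
            (τ⁻¹ * Complex.exp (Real.pi * Complex.I * z ^ 2 / τ) * Phi z τ) := by ring
      _ = -(τ⁻¹ * Complex.exp (Real.pi * Complex.I * z ^ 2 / τ) * Phi z τ) := by
            rw [hcom]; ring
  rw [HH, HH, if_neg hzτ, if_neg hz, hF, hG, neg_div_neg_eq]

lemma HH_periodic_one : Function.Periodic (HH τ) 1 := by
  have hc : Continuous (HH τ) := (HH_diff hτ).continuous
  have h1 : Continuous (fun z => HH τ (z + 1)) := hc.comp (continuous_id.add continuous_const)
  have := Continuous.ext_on (lat_dense_compl (σ := τ)) h1 hc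
    (fun w hw => HH_per_one hτ hw)
  intro x
  exact congrFun this x

lemma HH_periodic_tau : Function.Periodic (HH τ) τ := by
  have hc : Continuous (HH τ) := (HH_diff hτ).continuous
  have h1 : Continuous (fun z => HH τ (z + τ)) := hc.comp (continuous_id.add continuous_const)
  have := Continuous.ext_on (lat_dense_compl (σ := τ)) h1 hc
    (fun w hw => HH_per_tau hτ hw)
  intro x
  exact congrFun this x

lemma exists_fund (z : ℂ) : ∃ x y : ℝ, x ∈ Set.Icc (0:ℝ) 1 ∧ y ∈ Set.Icc (0:ℝ) 1 ∧
    ∃ m n : ℤ, z = ((x:ℂ) + y * τ) + m + n * τ := by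
  have him : τ.im ≠ 0 := ne_of_gt hτ
  refine ⟨Int.fract (z.re - ⌊z.im / τ.im⌋ * τ.re - Int.fract (z.im / τ.im) * τ.re),
          Int.fract (z.im / τ.im),
          ⟨Int.fract_nonneg _, (Int.fract_lt_one _).le⟩,
          ⟨Int.fract_nonneg _, (Int.fract_lt_one _).le⟩,
          ⌊z.re - ⌊z.im / τ.im⌋ * τ.re - Int.fract (z.im / τ.im) * τ.re⌋, ⌊z.im / τ.im⌋, ?_⟩
  apply Complex.ext
  · simp only [Complex.add_re, Complex.mul_re, Complex.ofReal_re, Complex.ofReal_im,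
      Complex.intCast_re, Complex.intCast_im, Int.fract]
    ring
  · simp only [Complex.add_im, Complex.mul_im, Complex.ofReal_re, Complex.ofReal_im,
      Complex.intCast_re, Complex.intCast_im, Int.fract]
    field_simp
    ring

lemma HH_bounded : Bornology.IsBounded (Set.range (HH τ)) := by
  have hDc : IsCompact ((fun p : ℝ × ℝ => ((p.1 : ℂ) + p.2 * τ)) ''
      (Set.Icc (0:ℝ) 1 ×ˢ Set.Icc (0:ℝ) 1)) := by
    apply (isCompact_Icc.prod isCompact_Icc).image
    continuity
  have hsub : Set.range (HH τ) ⊆ HH τ '' ((fun p : ℝ × ℝ => ((p.1 : ℂ) + p.2 * τ)) ''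
      (Set.Icc (0:ℝ) 1 ×ˢ Set.Icc (0:ℝ) 1)) := by
    rintro _ ⟨z, rfl⟩
    obtain ⟨x, y, hx, hy, m, n, hz⟩ := exists_fund hτ z
    refine ⟨(x:ℂ) + y * τ, ⟨(x, y), Set.mk_mem_prod hx hy, rfl⟩, ?_⟩
    rw [hz]
    have pτ := (HH_periodic_tau hτ).int_mul n
    have p1 := (HH_periodic_one hτ).int_mul m
    have e1 : HH τ ((x:ℂ) + y * τ + m + n * τ) = HH τ ((x:ℂ) + y * τ + m) := pτ _
    have e2 : HH τ ((x:ℂ) + y * τ + m) = HH τ ((x:ℂ) + y * τ) := by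
      have := p1 ((x:ℂ) + y * τ)
      simpa using this
    rw [e1, e2]
  exact (Bornology.IsBounded.subset (hDc.image (HH_diff hτ).continuous).isBounded hsub)

lemma Phi_zero_zero : Phi (0:ℂ) τ = 0 := by
  rw [Phi_eq, SS_zero, zero_mul]

lemma HH_zero_val : HH τ 0 = 1 := by
  have h0lat : (0:ℂ) ∈ ZLat τ := lat_zero
  rw [HH, if_pos h0lat]
  have hF0 : HasDerivAt (FF τ) (2 * Real.pi * Complex.I * τ⁻¹) 0 := by
    have hinner : HasDerivAt (fun z : ℂ => z / τ) τ⁻¹ 0 := by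
      simpa [div_eq_mul_inv] using (hasDerivAt_id (0:ℂ)).mul_const τ⁻¹
    have houter : HasDerivAt (fun w => Phi w (-1/τ)) (2 * Real.pi * Complex.I) ((0:ℂ)/τ) := by
      rw [zero_div]
      exact hasDerivAt_Phi0 (tau'_im hτ)
    exact houter.comp 0 hinner
  have hG0 : HasDerivAt (GG τ) (τ⁻¹ * (2 * Real.pi * Complex.I)) 0 := by
    have h1 : HasDerivAt (fun z : ℂ => z ^ 2) 0 0 := by
      simpa using hasDerivAt_pow 2 (0:ℂ)
    have hu : HasDerivAt (fun z : ℂ => Real.pi * Complex.I * z ^ 2 / τ) 0 0 := by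
      have := (h1.const_mul ((Real.pi:ℂ) * Complex.I)).div_const τ
      simpa using this
    have hE : HasDerivAt (fun z : ℂ => Complex.exp (Real.pi * Complex.I * z ^ 2 / τ)) 0 0 := by
      have := hu.cexp
      simpa using this
    have hΦ : HasDerivAt (fun z => Phi z τ) (2 * Real.pi * Complex.I) 0 := hasDerivAt_Phi0 hτ
    have hprod := ((hasDerivAt_const (0:ℂ) τ⁻¹).mul hE).mul hΦ
    have : ((0 * Complex.exp (Real.pi * Complex.I * (0:ℂ) ^ 2 / τ) + τ⁻¹ * 0) * Phi 0 τ +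
        τ⁻¹ * Complex.exp (Real.pi * Complex.I * (0:ℂ) ^ 2 / τ) * (2 * Real.pi * Complex.I)) =
        τ⁻¹ * (2 * Real.pi * Complex.I) := by
      rw [Phi_zero_zero hτ]
      simp
    simp only [Pi.mul_def] at hprod
    rw [this] at hprod
    exact hprod
  rw [hF0.deriv, hG0.deriv]
  have hpi : (Real.pi : ℂ) ≠ 0 := by
    simpa using Real.pi_ne_zero
  have hne : τ⁻¹ * (2 * (Real.pi : ℂ) * Complex.I) ≠ 0 := by
    apply mul_ne_zero (inv_ne_zero (tau_ne_zero hτ))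
    simp [hpi, Complex.I_ne_zero]
  rw [show 2 * (Real.pi : ℂ) * Complex.I * τ⁻¹ = τ⁻¹ * (2 * Real.pi * Complex.I) by ring]
  exact div_self hne

lemma HH_const (z : ℂ) : HH τ z = 1 := by
  have h := (HH_diff hτ).apply_eq_apply_of_bounded (HH_bounded hτ) z 0
  rw [h, HH_zero_val hτ]

lemma FF_eq_GG : FF τ = GG τ := by
  apply Continuous.ext_on (lat_dense_compl (σ := τ)) (FF_diff hτ).continuous
    (GG_diff hτ).continuous
  intro z hz
  have h1 := HH_const hτ z
  rw [HH, if_neg hz] at h1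
  have := GG_ne_zero hτ hz
  field_simp at h1
  exact h1


end Main

/-- `Φ(z, τ+1) = Φ(z,τ)` and `Φ(z/τ, −1/τ) = τ⁻¹ exp(πiz²/τ) Φ(z,τ)`. -/
theorem Phi_generators_transform (τ : ℂ) (hτ : 0 < τ.im) (z : ℂ) :
    Phi z (τ + 1) = Phi z τ ∧
    Phi (z / τ) (-1 / τ) =
      τ⁻¹ * Complex.exp (Real.pi * Complex.I * z ^ 2 / τ) * Phi z τ := by
  constructor
  · have hq : Complex.exp (2 * Real.pi * Complex.I * (τ + 1)) =
        Complex.exp (2 * Real.pi * Complex.I * τ) := by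
      rw [show 2 * (Real.pi : ℂ) * Complex.I * (τ + 1) =
        2 * Real.pi * Complex.I * τ + 2 * Real.pi * Complex.I by ring,
        Complex.exp_add, Complex.exp_two_pi_mul_I, mul_one]
    unfold Phi
    rw [hq]
  · exact congrFun (FF_eq_GG hτ) z
end

section
/- Let H be a finite group and h₁ ∈ H, with centralizer C(h₁) = {g ∈ H : g h₁ = h₁ g}. Then the map sending a conjugacy class [h₂] of the group C(h₁) (where h₂ ∈ C(h₁)) to the class [(h₁,h₂)] ∈ Ĉ(H) is well defined and is a bijection from the set of conjugacy classes of C(h₁) onto the set { δ ∈ Ĉ(H) : δ⁽¹⁾ = [h₁] }, where [h₁] is the conjugacy class of h₁ in H. -/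
/-- `CM(H)`: the type of commuting pairs of elements of the group `H`. -/
def CM (H : Type*) [Group H] : Type _ := {p : H × H // Commute p.1 p.2}

/-- Simultaneous conjugation of a commuting pair by `g ∈ H`. -/
def conjCM {H : Type*} [Group H] (g : H) (p : CM H) : CM H :=
  ⟨(g * p.val.1 * g⁻¹, g * p.val.2 * g⁻¹), by
    simpa using p.prop.map (MulAut.conj g)⟩

/-- The relation on `CM(H)` whose quotient is the orbit set `Ĉ(H)` of the
simultaneous-conjugation action. -/
def conjRel {H : Type*} [Group H] (p q : CM H) : Prop := ∃ g : H, conjCM g p = q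

/-- `Ĉ(H)`: the set of orbits of the simultaneous-conjugation action of `H` on `CM(H)`. -/
def CHat (H : Type*) [Group H] : Type _ := Quot (conjRel (H := H))

/-- `δ ↦ δ⁽¹⁾`: the conjugacy class in `H` of the first component of a class
`δ = [(h₁,h₂)] ∈ Ĉ(H)`. -/
def deltaOne {H : Type*} [Group H] : CHat H → ConjClasses H :=
  Quot.lift (fun p => ConjClasses.mk p.val.1) (by
    rintro p q ⟨g, rfl⟩
    show ConjClasses.mk p.val.1 = ConjClasses.mk (g * p.val.1 * g⁻¹)
    exact ConjClasses.mk_eq_mk_iff_isConj.mpr (isConj_iff.mpr ⟨g, rfl⟩))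

lemma conjCM_mul {H : Type*} [Group H] (g g' : H) (p : CM H) :
    conjCM g (conjCM g' p) = conjCM (g * g') p := by
  apply Subtype.ext
  simp [conjCM, Prod.ext_iff, mul_assoc]

lemma conjCM_one {H : Type*} [Group H] (p : CM H) : conjCM 1 p = p := by
  apply Subtype.ext
  simp [conjCM]

lemma conjRel_equiv {H : Type*} [Group H] : Equivalence (conjRel (H := H)) := by
  constructor
  · exact fun p => ⟨1, conjCM_one p⟩
  · rintro p q ⟨g, rfl⟩
    exact ⟨g⁻¹, by rw [conjCM_mul, inv_mul_cancel, conjCM_one]⟩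
  · rintro p q r ⟨g, rfl⟩ ⟨g', rfl⟩
    exact ⟨g' * g, (conjCM_mul g' g p).symm⟩

/-- For a finite group `H` and `h₁ ∈ H`, the map `[h₂] ↦ [(h₁,h₂)]` is a well-defined
bijection from the conjugacy classes of the centralizer `C(h₁)` onto
`{δ ∈ Ĉ(H) : δ⁽¹⁾ = [h₁]}`. -/
theorem conjClasses_centralizer_equiv {H : Type*} [Group H] [Fintype H] (h₁ : H) :
    ∃ Ψ : ConjClasses (Subgroup.centralizer {h₁}) →
        {δ : CHat H // deltaOne δ = ConjClasses.mk h₁},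
      Function.Bijective Ψ ∧
      ∀ h₂ : Subgroup.centralizer {h₁},
        (Ψ (ConjClasses.mk h₂)).val =
          Quot.mk _ (⟨(h₁, (h₂ : H)),
            Subgroup.mem_centralizer_iff.mp h₂.prop h₁ (Set.mem_singleton h₁)⟩ : CM H) := by
  classical
  set C := Subgroup.centralizer ({h₁} : Set H) with hC
  have hcomm : ∀ h₂ : C, Commute h₁ (h₂ : H) := fun h₂ =>
    Subgroup.mem_centralizer_iff.mp h₂.prop h₁ (Set.mem_singleton h₁)
  let f : C → {δ : CHat H // deltaOne δ = ConjClasses.mk h₁} :=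
    fun h₂ => ⟨Quot.mk _ ⟨(h₁, (h₂ : H)), hcomm h₂⟩, rfl⟩
  have hresp : ∀ a b : C, IsConj a b → f a = f b := by
    intro a b hab
    obtain ⟨g, hg⟩ := isConj_iff.mp hab
    apply Subtype.ext
    apply Quot.sound
    refine ⟨(g : H), Subtype.ext (Prod.ext ?_ ?_)⟩
    · have := (hcomm g).eq
      show (g : H) * h₁ * (g : H)⁻¹ = h₁
      rw [← this]; group
    · exact congrArg Subtype.val hg
  refine ⟨fun c => Quotient.liftOn' c f (fun a b h => hresp a b h), ⟨?_, ?_⟩, ?_⟩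
  · -- injective
    intro c d
    induction c using Quotient.inductionOn' with | h a =>
    induction d using Quotient.inductionOn' with | h b =>
    intro hfe
    have h1 : (f a).val = (f b).val := congrArg Subtype.val hfe
    have h2 : conjRel (⟨(h₁, (a : H)), hcomm a⟩ : CM H) ⟨(h₁, (b : H)), hcomm b⟩ := by
      have := (Quot.eq (r := conjRel (H := H))).mp h1
      exact (Equivalence.eqvGen_iff conjRel_equiv).mp this
    obtain ⟨g, hg⟩ := h2
    have hg1 : g * h₁ * g⁻¹ = h₁ := congrArg (fun p : CM H => p.val.1) hg
    have hg2 : g * (a : H) * g⁻¹ = (b : H) := congrArg (fun p : CM H => p.val.2) hg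
    have hgC : g ∈ C := by
      apply Subgroup.mem_centralizer_iff.mpr
      rintro x rfl
      have : g * x = x * g := by
        calc g * x = (g * x * g⁻¹) * g := by group
        _ = x * g := by rw [hg1]
      exact this.symm
    apply Quotient.sound'
    exact isConj_iff.mpr ⟨⟨g, hgC⟩, Subtype.ext hg2⟩
  · -- surjective
    rintro ⟨δ, hδ⟩
    obtain ⟨p, rfl⟩ := Quot.exists_rep δ
    have : IsConj p.val.1 h₁ := ConjClasses.mk_eq_mk_iff_isConj.mp hδ
    obtain ⟨g, hg⟩ := isConj_iff.mp this
    have hbC : g * p.val.2 * g⁻¹ ∈ C := by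
      apply Subgroup.mem_centralizer_iff.mpr
      rintro x rfl
      have : Commute (g * p.val.1 * g⁻¹) (g * p.val.2 * g⁻¹) := (conjCM g p).prop
      rw [hg] at this
      exact this.eq
    refine ⟨Quotient.mk'' ⟨g * p.val.2 * g⁻¹, hbC⟩, Subtype.ext ?_⟩
    show (f ⟨g * p.val.2 * g⁻¹, hbC⟩).val = Quot.mk _ p
    exact Quot.sound (conjRel_equiv.symm ⟨g, Subtype.ext (Prod.ext hg rfl)⟩)
  · intro h₂
    rfl
end

section
/- Let τ ∈ ℂ with Im τ > 0 and let z ∈ ℂ. Suppose there exist integers m ≠ 0 and k such that mz + kτ ∈ ℤ. Then there exists a matrix A = [[a,b],[c,d]] ∈ SL₂(ℤ) (integers a, b, c, d with ad − bc = 1) such that z/(cτ + d) is a real number. -/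
/-- Let `Im τ > 0` and `z ∈ ℂ`. If `mz + kτ ∈ ℤ` for some integers `m ≠ 0` and `k`, then
there is `A = [[a,b],[c,d]] ∈ SL₂(ℤ)` such that `z/(cτ + d)` is real. -/
theorem exists_SL2_real_quotient (τ : ℂ) (hτ : 0 < τ.im) (z : ℂ)
    (h : ∃ m k j : ℤ, m ≠ 0 ∧ (m : ℂ) * z + (k : ℂ) * τ = (j : ℂ)) :
    ∃ a b c d : ℤ, a * d - b * c = 1 ∧ (z / ((c : ℂ) * τ + (d : ℂ))).im = 0 := by
  obtain ⟨m, k, j, hm, heq⟩ := h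
  by_cases hz : z = 0
  · exact ⟨1, 0, 0, 1, by ring, by simp [hz]⟩
  -- z ≠ 0, so (k, j) ≠ (0,0)
  have hmz : (m : ℂ) * z = (j : ℂ) - (k : ℂ) * τ := by linear_combination heq
  have hkj : ¬ (k = 0 ∧ j = 0) := by
    rintro ⟨rfl, rfl⟩
    apply hz
    have : (m : ℂ) * z = 0 := by simpa using hmz
    rcases mul_eq_zero.mp this with h1 | h1
    · exact absurd (by exact_mod_cast h1) hm
    · exact h1
  set g : ℤ := (Int.gcd k j : ℤ) with hg
  have hgpos : 0 < Int.gcd k j := by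
    rcases Nat.eq_zero_or_pos (Int.gcd k j) with h0 | h0
    · rw [Int.gcd_eq_zero_iff] at h0
      exact absurd h0 hkj
    · exact h0
  have hg0 : g ≠ 0 := by
    rw [hg]
    exact_mod_cast hgpos.ne'
  have hgk : g ∣ k := Int.gcd_dvd_left k j
  have hgj : g ∣ j := Int.gcd_dvd_right k j
  set c : ℤ := -(k / g) with hc
  set d : ℤ := j / g with hd
  have hck : g * c = -k := by
    rw [hc, mul_neg, Int.mul_ediv_cancel' hgk]
  have hdj : g * d = j := Int.mul_ediv_cancel' hgj
  have hcop : IsCoprime c d := by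
    rw [Int.isCoprime_iff_gcd_eq_one]
    have h1 := Int.gcd_div_gcd_div_gcd (i := k) (j := j) hgpos
    rw [hc, hd, Int.neg_gcd]
    exact h1
  obtain ⟨u, v, huv⟩ := hcop
  refine ⟨v, -u, c, d, by linarith [huv] <;> ring_nf, ?_⟩
  -- c*τ + d = (m/g) * z
  have key : (g : ℂ) * ((c : ℂ) * τ + (d : ℂ)) = (m : ℂ) * z := by
    rw [hmz]
    have h1 : ((g : ℤ) : ℂ) * (c : ℂ) = -(k : ℂ) := by exact_mod_cast congrArg (Int.cast : ℤ → ℂ) hck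
    have h2 : ((g : ℤ) : ℂ) * (d : ℂ) = (j : ℂ) := by exact_mod_cast congrArg (Int.cast : ℤ → ℂ) hdj
    ring_nf
    linear_combination τ * h1 + h2
  have hgC : (g : ℂ) ≠ 0 := Int.cast_ne_zero.mpr hg0
  have hmC : (m : ℂ) ≠ 0 := Int.cast_ne_zero.mpr hm
  have hcd : (c : ℂ) * τ + (d : ℂ) = (m : ℂ) * z / g := by
    field_simp at key ⊢
    linear_combination key
  rw [hcd]
  have : z / ((m : ℂ) * z / g) = (g : ℂ) / m := by
    field_simp
  rw [this]
  simp [Complex.div_im]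
end
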